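/- Let N be a positive integer and let L(N) = max{i : d_i(N) = 1} and R(N) = min{i : d_i(N) = 1} be the largest and smallest positions of a nonzero digit in the Bergman representation of N. Then for every n ≥ 1: L(N) = 2n and R(N) = -2n if and only if L_{2n} ≤ N ≤ L_{2n+1}; and for every n ≥ 0: L(N) = 2n+1 and R(N) = -(2n+2) if and only if L_{2n+1} + 1 ≤ N ≤ L_{2n+2} - 1. -/

import Mathlib

noncomputable section

attribute [local instance] Classical.propDecidable

/-- The golden mean φ = (1+√5)/2. -/
def goldenPhi : ℝ := (1 + Real.sqrt 5) / 2

/-- `c` is a phi-representation of `N`: a finitely supported digit function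
`c : ℤ → ℕ` with digits ≤ 1 such that `N = ∑ i, c i * φ ^ i`. -/
def IsPhiRep (N : ℕ) (c : ℤ →₀ ℕ) : Prop :=
  (∀ i, c i ≤ 1) ∧ (c.sum fun i a => (a : ℝ) * goldenPhi ^ i) = N

/-- Bergman representation: no two consecutive digits equal 1. -/
def IsBergman (N : ℕ) (c : ℤ →₀ ℕ) : Prop :=
  IsPhiRep N c ∧ ∀ i : ℤ, c (i + 1) * c i = 0

/-- Admissible representation: no two consecutive digits equal 1,
except possibly `c 1 = c 0 = 1`. -/
def IsAdmissible (N : ℕ) (c : ℤ →₀ ℕ) : Prop :=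
  IsPhiRep N c ∧ ∀ i : ℤ, i ≠ 0 → c (i + 1) * c i = 0

/-- The Bergman representation of `N` (unique when `N ≥ 1`). -/
noncomputable def bergmanRep (N : ℕ) : ℤ →₀ ℕ :=
  if h : ∃ c, IsBergman N c then h.choose else 0

/-- The canonical representation of `N`: the admissible representation with
`c 1 = c 0 = 1` if such exists, and the Bergman representation otherwise. -/
noncomputable def canonicalRep (N : ℕ) : ℤ →₀ ℕ :=
  if h : ∃ c, IsAdmissible N c ∧ c 1 = 1 ∧ c 0 = 1 then h.choose else bergmanRep N

/-- The Lucas numbers: L 0 = 2, L 1 = 1, L (n+2) = L (n+1) + L n. -/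
def lucas : ℕ → ℕ
  | 0 => 2
  | 1 => 1
  | n + 2 => lucas (n + 1) + lucas n

/-! ### Auxiliary lemmas -/

open Real

lemma phi_zpow_pos (i : ℤ) : 0 < goldenRatio ^ i := zpow_pos goldenRatio_pos i

lemma phi_zpow_lt {m n : ℤ} (h : m < n) : goldenRatio ^ m < goldenRatio ^ n :=
  zpow_lt_zpow_right₀ one_lt_goldenRatio h

lemma phi_zpow_lt_iff {m n : ℤ} : goldenRatio ^ m < goldenRatio ^ n ↔ m < n :=
  zpow_lt_zpow_iff_right₀ one_lt_goldenRatio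

lemma phi_mul_self : goldenRatio * goldenRatio = goldenRatio + 1 := by
  have := goldenRatio_sq; rwa [sq] at this

lemma phi_zpow_add_two (m : ℤ) :
    goldenRatio ^ m + goldenRatio ^ (m + 1) = goldenRatio ^ (m + 2) := by
  have h1 : goldenRatio ^ (m + 1) = goldenRatio ^ m * goldenRatio :=
    zpow_add_one₀ goldenRatio_ne_zero m
  have h2 : goldenRatio ^ (m + 2) = goldenRatio ^ (m + 1) * goldenRatio := by
    rw [← zpow_add_one₀ goldenRatio_ne_zero, show m + 1 + 1 = m + 2 from by ring]
  rw [h1, h2, h1]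
  nlinarith [phi_mul_self, phi_zpow_pos m]

lemma phi_zpow_neg_lt_one {m : ℤ} (hm : 0 < m) : goldenRatio ^ (-m) < 1 := by
  have := phi_zpow_lt (show -m < 0 by omega)
  rwa [zpow_zero] at this

lemma sum_zpow_lt (S : Finset ℤ) : ∀ (b : ℤ), (∀ i ∈ S, i + 1 ∉ S) → (∀ i ∈ S, i ≤ b) →
    ∑ i ∈ S, goldenRatio ^ i < goldenRatio ^ (b + 1) := by
  induction S using Finset.strongInductionOn with
  | _ S ih =>
    intro b hadj hle
    rcases S.eq_empty_or_nonempty with rfl | hne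
    · simpa using phi_zpow_pos (b + 1)
    · set m := S.max' hne with hm
      have hmS : m ∈ S := S.max'_mem hne
      have hmb : m ≤ b := hle _ hmS
      have herase : S.erase m ⊂ S := Finset.erase_ssubset hmS
      have hsub : ∀ i ∈ S.erase m, i ≤ m - 2 := by
        intro i hi
        have hiS := Finset.mem_of_mem_erase hi
        have hne' : i ≠ m := Finset.ne_of_mem_erase hi
        have hle' : i ≤ m := S.le_max' i hiS
        have hne'' : i ≠ m - 1 := by
          intro h
          apply hadj i hiS
          have : i + 1 = m := by omega
          rwa [this]
        omega
      have ih' := ih _ herase (m - 2)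
        (fun i hi h1 => hadj i (Finset.mem_of_mem_erase hi) (Finset.mem_of_mem_erase h1)) hsub
      have hsum : ∑ i ∈ S, goldenRatio ^ i = goldenRatio ^ m + ∑ i ∈ S.erase m, goldenRatio ^ i :=
        (Finset.add_sum_erase _ _ hmS).symm
      have hkey : goldenRatio ^ (m - 2 + 1) + goldenRatio ^ m = goldenRatio ^ (m + 1) := by
        have h := phi_zpow_add_two (m - 2 + 1)
        rw [show m - 2 + 1 + 1 = m from by ring, show m - 2 + 1 + 2 = m + 1 from by ring] at h
        exact h
      have hle2 : goldenRatio ^ (m + 1) ≤ goldenRatio ^ (b + 1) := by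
        rcases eq_or_lt_of_le hmb with rfl | h
        · exact le_refl _
        · exact le_of_lt (phi_zpow_lt (by omega))
      calc ∑ i ∈ S, goldenRatio ^ i
          = goldenRatio ^ m + ∑ i ∈ S.erase m, goldenRatio ^ i := hsum
        _ < goldenRatio ^ m + goldenRatio ^ (m - 2 + 1) := by linarith
        _ = goldenRatio ^ (m + 1) := by linarith
        _ ≤ goldenRatio ^ (b + 1) := hle2

lemma sum_neg_zpow_lt (T : Finset ℤ) (a : ℤ) (hadj : ∀ i ∈ T, i + 1 ∉ T)
    (hge : ∀ i ∈ T, a ≤ i) : ∑ i ∈ T, goldenRatio ^ (-i) < goldenRatio ^ (-a + 1) := by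
  have himg : ∑ i ∈ T, goldenRatio ^ (-i) = ∑ j ∈ T.image (fun i => -i), goldenRatio ^ j := by
    rw [Finset.sum_image]
    intro x _ y _ hxy
    exact neg_inj.mp hxy
  rw [himg]
  apply sum_zpow_lt
  · intro j hj hj1
    obtain ⟨i, hi, rfl⟩ := Finset.mem_image.mp hj
    obtain ⟨i', hi', he⟩ := Finset.mem_image.mp hj1
    have hii : i' = i - 1 := by omega
    subst hii
    exact hadj _ hi' (by rw [show i - 1 + 1 = i from by ring]; exact hi)
  · intro j hj
    obtain ⟨i, hi, rfl⟩ := Finset.mem_image.mp hj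
    have := hge i hi
    omega

lemma sqrt5_self : Real.sqrt 5 * Real.sqrt 5 = 5 := Real.mul_self_sqrt (by norm_num)

lemma myConjZpow (i : ℤ) : ∃ p : ℚ × ℚ,
    goldenRatio ^ i = (p.1 : ℝ) + (p.2 : ℝ) * Real.sqrt 5 ∧
    goldenConj ^ i = (p.1 : ℝ) - (p.2 : ℝ) * Real.sqrt 5 := by
  induction i using Int.induction_on with
  | zero => exact ⟨(1, 0), by norm_num⟩
  | succ k ihk =>
    obtain ⟨⟨a, b⟩, h1, h2⟩ := ihk
    refine ⟨((a + 5 * b) / 2, (a + b) / 2), ?_, ?_⟩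
    · rw [zpow_add_one₀ goldenRatio_ne_zero, h1]
      show ((a : ℝ) + b * Real.sqrt 5) * ((1 + Real.sqrt 5) / 2) = _
      push_cast
      linear_combination ((b : ℝ) / 2) * sqrt5_self
    · rw [zpow_add_one₀ goldenConj_ne_zero, h2]
      show ((a : ℝ) - b * Real.sqrt 5) * ((1 - Real.sqrt 5) / 2) = _
      push_cast
      linear_combination ((b : ℝ) / 2) * sqrt5_self
  | pred k ihk =>
    obtain ⟨⟨a, b⟩, h1, h2⟩ := ihk
    refine ⟨((5 * b - a) / 2, (a - b) / 2), ?_, ?_⟩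
    · rw [show (-(k : ℤ) - 1) = (-(k : ℤ)) - 1 from rfl, zpow_sub_one₀ goldenRatio_ne_zero, h1,
        inv_goldenRatio]
      show ((a : ℝ) + b * Real.sqrt 5) * (-((1 - Real.sqrt 5) / 2)) = _
      push_cast
      linear_combination ((b : ℝ) / 2) * sqrt5_self
    · rw [zpow_sub_one₀ goldenConj_ne_zero, h2, inv_goldenConj]
      show ((a : ℝ) - b * Real.sqrt 5) * (-((1 + Real.sqrt 5) / 2)) = _
      push_cast
      linear_combination ((b : ℝ) / 2) * sqrt5_self

lemma myConjSum (S : Finset ℤ) : ∃ p : ℚ × ℚ,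
    ∑ i ∈ S, goldenRatio ^ i = (p.1 : ℝ) + (p.2 : ℝ) * Real.sqrt 5 ∧
    ∑ i ∈ S, goldenConj ^ i = (p.1 : ℝ) - (p.2 : ℝ) * Real.sqrt 5 := by
  classical
  induction S using Finset.induction_on with
  | empty => exact ⟨(0, 0), by norm_num⟩
  | @insert j T hj ih =>
    obtain ⟨⟨a, b⟩, h1, h2⟩ := ih
    obtain ⟨⟨a', b'⟩, g1, g2⟩ := myConjZpow j
    simp only [] at h1 h2 g1 g2
    refine ⟨(a + a', b + b'), ?_, ?_⟩
    · rw [Finset.sum_insert hj, g1, h1]; push_cast; ring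
    · rw [Finset.sum_insert hj, g2, h2]; push_cast; ring

lemma myConjEq (S : Finset ℤ) (N : ℕ) (h : ∑ i ∈ S, goldenRatio ^ i = (N : ℝ)) :
    ∑ i ∈ S, goldenConj ^ i = (N : ℝ) := by
  obtain ⟨⟨a, b⟩, h1, h2⟩ := myConjSum S
  simp only [] at h1 h2
  have h5 : Irrational (Real.sqrt 5) := Nat.Prime.irrational_sqrt (by norm_num)
  have hb : b = 0 := by
    by_contra hb
    have hbR : (b : ℝ) ≠ 0 := by exact_mod_cast hb
    refine h5 ⟨((N : ℚ) - a) / b, ?_⟩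
    push_cast
    rw [h] at h1
    field_simp
    linarith [h1]
  subst hb
  rw [h] at h1
  rw [h2]
  push_cast at h1 ⊢
  linarith [h1]

lemma psi_eq_neg_inv : goldenConj = -goldenRatio⁻¹ := by rw [inv_goldenRatio]; ring

lemma psi_zpow_even {i : ℤ} (h : Even i) : goldenConj ^ i = goldenRatio ^ (-i) := by
  rw [psi_eq_neg_inv, h.neg_zpow, inv_zpow, ← zpow_neg]

lemma psi_zpow_odd {i : ℤ} (h : Odd i) : goldenConj ^ i = -goldenRatio ^ (-i) := by
  rw [psi_eq_neg_inv, h.neg_zpow, inv_zpow, ← zpow_neg]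

lemma lucas_real_pair (n : ℕ) :
    ((lucas n : ℝ) = goldenRatio ^ n + goldenConj ^ n) ∧
    ((lucas (n + 1) : ℝ) = goldenRatio ^ (n + 1) + goldenConj ^ (n + 1)) := by
  induction n with
  | zero => norm_num [lucas, goldenRatio_add_goldenConj]
  | succ k ih =>
    refine ⟨ih.2, ?_⟩
    show (lucas (k + 2) : ℝ) = _
    rw [lucas]
    push_cast
    rw [ih.1, ih.2]
    linear_combination (goldenRatio ^ k) * goldenRatio_sq + (goldenConj ^ k) * goldenConj_sq -
      ((goldenRatio ^ k + goldenConj ^ k) / 2) * sqrt5_self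

lemma lucas_even {m : ℕ} (h : Even m) :
    (lucas m : ℝ) = goldenRatio ^ (m : ℤ) + goldenRatio ^ (-(m : ℤ)) := by
  rw [(lucas_real_pair m).1, ← zpow_natCast goldenRatio, ← zpow_natCast goldenConj,
    psi_zpow_even (by exact_mod_cast h)]

lemma lucas_odd {m : ℕ} (h : Odd m) :
    (lucas m : ℝ) = goldenRatio ^ (m : ℤ) - goldenRatio ^ (-(m : ℤ)) := by
  rw [(lucas_real_pair m).1, ← zpow_natCast goldenRatio, ← zpow_natCast goldenConj,
    psi_zpow_odd (by exact_mod_cast h)]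
  ring

lemma lucas_pos (n : ℕ) : 0 < lucas n := by
  induction n using Nat.strong_induction_on with
  | _ n ih =>
    match n with
    | 0 => decide
    | 1 => decide
    | k + 2 =>
      have h1 := ih (k + 1) (by omega)
      have h2 := ih k (by omega)
      rw [lucas]; omega

theorem stmt7 (N : ℕ) (hN : 0 < N) (l r : ℤ)
    (hl : IsGreatest {i : ℤ | bergmanRep N i = 1} l)
    (hr : IsLeast {i : ℤ | bergmanRep N i = 1} r) :
    (∀ n : ℕ, 1 ≤ n →
      ((l = (2 * n : ℤ) ∧ r = -(2 * n : ℤ)) ↔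
        (lucas (2 * n) ≤ N ∧ N ≤ lucas (2 * n + 1)))) ∧
    (∀ n : ℕ,
      ((l = (2 * n + 1 : ℤ) ∧ r = -(2 * n + 2 : ℤ)) ↔
        (lucas (2 * n + 1) + 1 ≤ N ∧ N ≤ lucas (2 * n + 2) - 1))) := by
  classical
  have hgold : goldenPhi = goldenRatio := rfl
  have hex : ∃ c, IsBergman N c := by
    by_contra hcon
    have h0 : bergmanRep N = 0 := by rw [bergmanRep, dif_neg hcon]
    have h1 := hl.1
    rw [Set.mem_setOf_eq, h0] at h1
    simp at h1
  have hc : IsBergman N (bergmanRep N) := by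
    rw [bergmanRep, dif_pos hex]; exact hex.choose_spec
  obtain ⟨⟨hle1, hsum⟩, hadj⟩ := hc
  set S : Finset ℤ := (bergmanRep N).support with hSdef
  have hmem : ∀ i, i ∈ S ↔ bergmanRep N i = 1 := by
    intro i
    rw [hSdef, Finsupp.mem_support_iff]
    have := hle1 i; omega
  have hlS : l ∈ S := (hmem l).mpr hl.1
  have hrS : r ∈ S := (hmem r).mpr hr.1
  have hub' : ∀ i ∈ S, i ≤ l := fun i hi => hl.2 ((hmem i).mp hi)
  have hlb' : ∀ i ∈ S, r ≤ i := fun i hi => hr.2 ((hmem i).mp hi)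
  have hadjS : ∀ i ∈ S, i + 1 ∉ S := by
    intro i hi h1
    have h := hadj i
    rw [(hmem (i + 1)).mp h1, (hmem i).mp hi] at h
    omega
  have hSsum : ∑ i ∈ S, goldenRatio ^ i = (N : ℝ) := by
    rw [← hsum, Finsupp.sum]
    apply Finset.sum_congr rfl
    intro i hi
    rw [(hmem i).mp hi, hgold]
    norm_num
  have hconj : ∑ i ∈ S, goldenConj ^ i = (N : ℝ) := myConjEq S N hSsum
  set SE := S.filter (fun i => Even i) with hSE
  set SO := S.filter (fun i => ¬ Even i) with hSO
  have hSEsub : ∀ i ∈ SE, i ∈ S := fun i hi => (Finset.mem_filter.mp hi).1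
  have hSOsub : ∀ i ∈ SO, i ∈ S := fun i hi => (Finset.mem_filter.mp hi).1
  have hsplit : (∑ i ∈ SE, goldenRatio ^ (-i)) - (∑ i ∈ SO, goldenRatio ^ (-i)) = (N : ℝ) := by
    rw [← hconj,
      ← Finset.sum_filter_add_sum_filter_not S (fun i => Even i) (fun i => goldenConj ^ i)]
    have e1 : ∑ i ∈ SE, goldenConj ^ i = ∑ i ∈ SE, goldenRatio ^ (-i) :=
      Finset.sum_congr rfl (fun i hi => psi_zpow_even (Finset.mem_filter.mp hi).2)
    have e2 : ∑ i ∈ SO, goldenConj ^ i = ∑ i ∈ SO, -goldenRatio ^ (-i) :=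
      Finset.sum_congr rfl
        (fun i hi => psi_zpow_odd (Int.not_even_iff_odd.mp (Finset.mem_filter.mp hi).2))
    rw [e1, e2, Finset.sum_neg_distrib]
    ring
  have hN1 : (1 : ℝ) ≤ (N : ℝ) := by exact_mod_cast hN
  have hup : (N : ℝ) < goldenRatio ^ (l + 1) := by
    rw [← hSsum]; exact sum_zpow_lt S l hadjS hub'
  have hlo : goldenRatio ^ l ≤ (N : ℝ) := by
    rw [← hSsum]
    exact Finset.single_le_sum (fun i _ => le_of_lt (phi_zpow_pos i)) hlS
  have hlo2 : r < l → goldenRatio ^ l + goldenRatio ^ r ≤ (N : ℝ) := by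
    intro hrl
    rw [← hSsum, ← Finset.add_sum_erase _ _ hlS]
    have h := Finset.single_le_sum (f := fun i => goldenRatio ^ i)
      (fun i _ => le_of_lt (phi_zpow_pos i))
      (Finset.mem_erase.mpr ⟨ne_of_lt hrl, hrS⟩)
    linarith
  have hadjSE : ∀ i ∈ SE, i + 1 ∉ SE :=
    fun i hi h1 => hadjS i (hSEsub i hi) (hSEsub _ h1)
  have hadjSO : ∀ i ∈ SO, i + 1 ∉ SO := by
    intro i hi h1
    have p1 := (Finset.mem_filter.mp hi).2
    have p2 := (Finset.mem_filter.mp h1).2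
    exact p2 (Int.even_add_one.mpr p1)
  have hOnn : 0 ≤ ∑ i ∈ SO, goldenRatio ^ (-i) :=
    Finset.sum_nonneg (fun i _ => le_of_lt (phi_zpow_pos _))
  have hreven : Even r := by
    by_contra hodd
    have hrSO : r ∈ SO := Finset.mem_filter.mpr ⟨hrS, hodd⟩
    have hO : goldenRatio ^ (-r) ≤ ∑ i ∈ SO, goldenRatio ^ (-i) :=
      Finset.single_le_sum (fun i _ => le_of_lt (phi_zpow_pos _)) hrSO
    have hEup : ∑ i ∈ SE, goldenRatio ^ (-i) < goldenRatio ^ (-(r + 2) + 1) := by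
      apply sum_neg_zpow_lt SE (r + 2) hadjSE
      intro i hi
      have hiS := hSEsub i hi
      have h1 := hlb' i hiS
      have h2 : i ≠ r := by rintro rfl; exact hodd (Finset.mem_filter.mp hi).2
      have h3 : i ≠ r + 1 := by rintro rfl; exact hadjS r hrS hiS
      omega
    have hlt : goldenRatio ^ (-(r + 2) + 1) < goldenRatio ^ (-r) := phi_zpow_lt (by omega)
    linarith
  have hrSE : r ∈ SE := Finset.mem_filter.mpr ⟨hrS, hreven⟩
  have hElow : goldenRatio ^ (-r) ≤ ∑ i ∈ SE, goldenRatio ^ (-i) :=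
    Finset.single_le_sum (fun i _ => le_of_lt (phi_zpow_pos _)) hrSE
  have hEup : ∑ i ∈ SE, goldenRatio ^ (-i) < goldenRatio ^ (-r + 1) :=
    sum_neg_zpow_lt SE r hadjSE (fun i hi => hlb' i (hSEsub i hi))
  have hOup : ∑ i ∈ SO, goldenRatio ^ (-i) < goldenRatio ^ (-(r + 3) + 1) := by
    apply sum_neg_zpow_lt SO (r + 3) hadjSO
    intro i hi
    have hiS := hSOsub i hi
    have h1 := hlb' i hiS
    have hodd := (Finset.mem_filter.mp hi).2
    have h2 : i ≠ r := by rintro rfl; exact hodd hreven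
    have h3 : i ≠ r + 1 := by rintro rfl; exact hadjS r hrS hiS
    have h4 : i ≠ r + 2 := by
      rintro rfl
      exact hodd (by obtain ⟨t, ht⟩ := hreven; exact ⟨t + 1, by omega⟩)
    omega
  have hconj_up : (N : ℝ) < goldenRatio ^ (-r + 1) := by linarith
  have hid : goldenRatio ^ (-(r + 3) + 1) + goldenRatio ^ (-r - 1) = goldenRatio ^ (-r) := by
    have h := phi_zpow_add_two (-r - 2)
    rw [show -r - 2 + 1 = -r - 1 from by ring, show -r - 2 + 2 = -r from by ring] at h
    rw [show -(r + 3) + 1 = -r - 2 from by ring]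
    exact h
  have hconj_lo : goldenRatio ^ (-r - 1) < (N : ℝ) := by linarith
  have hcomb1 : l + r ≤ 0 := by
    have h := phi_zpow_lt_iff.mp (lt_of_le_of_lt hlo hconj_up)
    omega
  have hcomb2 : -1 ≤ l + r := by
    have h := phi_zpow_lt_iff.mp (lt_trans hconj_lo hup)
    omega
  obtain ⟨t, ht⟩ := hreven
  constructor
  · -- even case
    intro n hn
    have hn' : (1 : ℤ) ≤ (n : ℤ) := by exact_mod_cast hn
    constructor
    · rintro ⟨hleq, hreq⟩
      have hrl : r < l := by omega
      have hlow := hlo2 hrl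
      rw [hleq, hreq] at hlow
      have hupl := hup
      rw [hleq] at hupl
      constructor
      · have hcast : (lucas (2 * n) : ℝ) ≤ (N : ℝ) := by
          rw [lucas_even (even_two_mul n)]
          push_cast
          linarith
        exact_mod_cast hcast
      · have h1 : goldenRatio ^ (-(2 * (n : ℤ) + 1)) < 1 := phi_zpow_neg_lt_one (by omega)
        have hcast : (N : ℝ) < (lucas (2 * n + 1) : ℝ) + 1 := by
          rw [lucas_odd (odd_two_mul_add_one n)]
          push_cast at hupl ⊢
          linarith
        have : N < lucas (2 * n + 1) + 1 := by exact_mod_cast hcast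
        omega
    · rintro ⟨h1n, h2n⟩
      have hc1 : (lucas (2 * n) : ℝ) ≤ (N : ℝ) := by exact_mod_cast h1n
      have hc2 : (N : ℝ) ≤ (lucas (2 * n + 1) : ℝ) := by exact_mod_cast h2n
      rw [lucas_even (even_two_mul n)] at hc1
      rw [lucas_odd (odd_two_mul_add_one n)] at hc2
      push_cast at hc1 hc2
      have key1 : goldenRatio ^ (2 * (n : ℤ)) < (N : ℝ) := by
        have := phi_zpow_pos (-(2 * (n : ℤ)))
        linarith
      have key2 : (N : ℝ) < goldenRatio ^ (2 * (n : ℤ) + 1) := by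
        have := phi_zpow_pos (-(2 * (n : ℤ) + 1))
        linarith
      have hb1 := phi_zpow_lt_iff.mp (lt_trans key1 hup)
      have hb2 := phi_zpow_lt_iff.mp (lt_of_le_of_lt hlo key2)
      have hleq : l = 2 * (n : ℤ) := by omega
      exact ⟨hleq, by omega⟩
  · -- odd case
    intro n
    constructor
    · rintro ⟨hleq, hreq⟩
      have hrl : r < l := by omega
      have hlow := hlo2 hrl
      rw [hleq, hreq] at hlow
      have hupl := hup
      rw [hleq, show 2 * (n : ℤ) + 1 + 1 = 2 * (n : ℤ) + 2 from by ring] at hupl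
      have hident := phi_zpow_add_two (-(2 * (n : ℤ)) - 2)
      rw [show -(2 * (n : ℤ)) - 2 + 1 = -(2 * (n : ℤ) + 1) from by ring,
        show -(2 * (n : ℤ)) - 2 + 2 = -(2 * (n : ℤ)) from by ring] at hident
      constructor
      · have hcast : (lucas (2 * n + 1) : ℝ) < (N : ℝ) := by
          rw [lucas_odd (odd_two_mul_add_one n)]
          push_cast at hlow ⊢
          have := phi_zpow_pos (-(2 * (n : ℤ)))
          have he : -(2 * (n : ℤ)) - 2 = -(2 * (n : ℤ) + 2) := by ring
          rw [he] at hident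
          linarith
        have : lucas (2 * n + 1) < N := by exact_mod_cast hcast
        omega
      · have h1 : (0:ℝ) < goldenRatio ^ (-(2 * (n : ℤ) + 2)) := phi_zpow_pos _
        have hcast : (N : ℝ) < (lucas (2 * n + 2) : ℝ) := by
          rw [lucas_even ⟨n + 1, by ring⟩]
          push_cast at hupl ⊢
          linarith
        have hlt : N < lucas (2 * n + 2) := by exact_mod_cast hcast
        omega
    · rintro ⟨h1n, h2n⟩
      have hlucpos := lucas_pos (2 * n + 2)
      have h2n' : N + 1 ≤ lucas (2 * n + 2) := by omega
      have hc1 : (lucas (2 * n + 1) : ℝ) + 1 ≤ (N : ℝ) := by exact_mod_cast h1n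
      have hc2 : (N : ℝ) + 1 ≤ (lucas (2 * n + 2) : ℝ) := by exact_mod_cast h2n'
      rw [lucas_odd (odd_two_mul_add_one n)] at hc1
      rw [lucas_even ⟨n + 1, by ring⟩] at hc2
      push_cast at hc1 hc2
      have e1 : goldenRatio ^ (-(2 * (n : ℤ) + 1)) < 1 := phi_zpow_neg_lt_one (by omega)
      have e2 : goldenRatio ^ (-(2 * (n : ℤ) + 2)) < 1 := phi_zpow_neg_lt_one (by omega)
      have key1 : goldenRatio ^ (2 * (n : ℤ) + 1) < (N : ℝ) := by linarith
      have key2 : (N : ℝ) < goldenRatio ^ (2 * (n : ℤ) + 2) := by linarith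
      have hb1 := phi_zpow_lt_iff.mp (lt_trans key1 hup)
      have hb2 := phi_zpow_lt_iff.mp (lt_of_le_of_lt hlo key2)
      have hleq : l = 2 * (n : ℤ) + 1 := by omega
      exact ⟨hleq, by omega⟩
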